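/- arXiv:1504.00777 — 5 statements merged into one kernel-verified Lean document; each statement's English description precedes it below -/
import Mathlib

section
/- Let h > 0. For all j, k ∈ ℤ one has ∫_0^1 u_j(x)·conj(v_k(x)) dx = 1 if j = k and 0 if j ≠ k. Consequently the system {u_j : j ∈ ℤ} is minimal in L²(0,1): for every j ∈ ℤ, u_j does not belong to the closure in L²(0,1) of the linear span of {u_k : k ∈ ℤ, k ≠ j}. -/
/-!
The weights `h^x` and `h^{-x}` cancel in `u_j · conj v_k`, leaving the character
`e^{2πi(j-k)x}`, so the biorthogonality is the orthogonality of the Fourier basis on `[0,1]`.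
Pairing with `v_j` is a continuous linear functional on `L²(0,1)` that kills every `u_k`
with `k ≠ j`, hence the closure of their span, but takes the value `1` at `u_j`.
-/

open Complex MeasureTheory Set

noncomputable section

/-- The eigenfunction `u j x = h^x e^{2π i j x}` of the operator `O_h^(1)`. -/
def uFun (h : ℝ) (j : ℤ) (x : ℝ) : ℂ :=
  Complex.exp ((x : ℂ) * Real.log h) *
    Complex.exp (2 * Real.pi * Complex.I * (j : ℂ) * (x : ℂ))

/-- The biorthogonal function `v j x = h^{-x} e^{2π i j x}`. -/
def vFun (h : ℝ) (j : ℤ) (x : ℝ) : ℂ :=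
  Complex.exp (-((x : ℂ) * Real.log h)) *
    Complex.exp (2 * Real.pi * Complex.I * (j : ℂ) * (x : ℂ))

theorem ContinuousLinearMap.notMem_closure_span_image_ne {R E F ι : Type*} [Semiring R]
    [TopologicalSpace E] [AddCommMonoid E] [Module R E]
    [TopologicalSpace F] [AddCommMonoid F] [Module R F] [T1Space F]
    (f : E →L[R] F) (u : ι → E) (j : ι) (hj : f (u j) ≠ 0) (hk : ∀ k ≠ j, f (u k) = 0) :
    u j ∉ closure (Submodule.span R (u '' {k | k ≠ j}) : Set E) := by
  have hspan : Submodule.span R (u '' {k | k ≠ j}) ≤ LinearMap.ker (f : E →ₗ[R] F) := by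
    rw [Submodule.span_le]
    rintro _ ⟨k, hkj, rfl⟩
    exact hk k hkj
  exact fun hmem => hj (closure_minimal hspan f.isClosed_ker hmem)

theorem Continuous.memLp_restrict_of_subset_isCompact {X E : Type*} [TopologicalSpace X]
    [MeasurableSpace X] [OpensMeasurableSpace X] [NormedAddCommGroup E]
    [SecondCountableTopologyEither X E] {μ : Measure X} {s K : Set X}
    [IsFiniteMeasure (μ.restrict s)] {f : X → E} (hf : Continuous f) (hs : MeasurableSet s)
    (hK : IsCompact K) (hsK : s ⊆ K) (p : ENNReal) :
    MemLp f p (μ.restrict s) := by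
  obtain ⟨C, hC⟩ := hK.exists_bound_of_continuousOn hf.continuousOn
  exact (memLp_top_of_bound hf.aestronglyMeasurable C
    (ae_restrict_of_forall_mem hs fun x hx => hC x (hsK hx))).mono_exponent le_top

theorem MeasureTheory.L2.inner_toLp_eq_integral {α 𝕜 : Type*} [MeasurableSpace α] [RCLike 𝕜]
    {μ : Measure α} {f g : α → 𝕜} (hf : MemLp f 2 μ) {G : Lp 𝕜 2 μ}
    (hG : G =ᵐ[μ] g) :
    inner 𝕜 (hf.toLp f) G = ∫ x, g x * (starRingEnd 𝕜) (f x) ∂μ := by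
  rw [L2.inner_def]
  refine integral_congr_ae ?_
  filter_upwards [hf.coeFn_toLp, hG] with x hfx hGx
  rw [RCLike.inner_apply, hfx, hGx]

theorem integral_exp_int_mul_two_pi_I_mul (n : ℤ) :
    ∫ x in (0:ℝ)..1, exp (n * (2 * Real.pi * I) * x) = if n = 0 then 1 else 0 := by
  rcases eq_or_ne n 0 with rfl | hn
  · simp
  have hc : (n : ℂ) * (2 * Real.pi * I) ≠ 0 := by
    simp [hn, Real.pi_ne_zero, I_ne_zero]
  rw [integral_exp_mul_complex hc, if_neg hn]
  simp [exp_int_mul_two_pi_mul_I]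

theorem uFun_mul_conj_vFun (h : ℝ) (j k : ℤ) (x : ℝ) :
    uFun h j x * (starRingEnd ℂ) (vFun h k x) =
      exp (((j - k : ℤ) : ℂ) * (2 * Real.pi * I) * x) := by
  rw [uFun, vFun, map_mul, ← exp_conj, ← exp_conj, ← exp_add, ← exp_add, ← exp_add]
  congr 1
  simp only [map_neg, map_mul, conj_ofReal, conj_I, map_ofNat, map_intCast]
  push_cast
  ring

theorem integral_uFun_mul_conj_vFun (h : ℝ) (j k : ℤ) :
    ∫ x in (0:ℝ)..1, uFun h j x * (starRingEnd ℂ) (vFun h k x) = if j = k then 1 else 0 := by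
  simp only [uFun_mul_conj_vFun, integral_exp_int_mul_two_pi_I_mul, sub_eq_zero]

theorem memLp_vFun (h : ℝ) (j : ℤ) (p : ENNReal) :
    MemLp (vFun h j) p (volume.restrict (Ioo 0 1)) :=
  (by unfold vFun; fun_prop : Continuous (vFun h j)).memLp_restrict_of_subset_isCompact
    measurableSet_Ioo isCompact_Icc Ioo_subset_Icc_self p

theorem stmt_1_general (h : ℝ) :
    (∀ j k : ℤ,
      (∫ x in (0:ℝ)..1, uFun h j x * (starRingEnd ℂ) (vFun h k x)) =
        if j = k then 1 else 0) ∧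
    (∀ U : ℤ → Lp ℂ 2 (volume.restrict (Ioo (0:ℝ) 1)),
      (∀ j, ⇑(U j) =ᵐ[volume.restrict (Ioo (0:ℝ) 1)] uFun h j) →
      ∀ j : ℤ,
        U j ∉ closure ((Submodule.span ℂ (U '' {k : ℤ | k ≠ j}) :
          Submodule ℂ (Lp ℂ 2 (volume.restrict (Ioo (0:ℝ) 1)))) : Set _)) := by
  refine ⟨integral_uFun_mul_conj_vFun h, fun U hU j => ?_⟩
  set v := (memLp_vFun h j 2).toLp (vFun h j)
  have hpair : ∀ k, innerSL ℂ v (U k) = if k = j then 1 else 0 := by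
    intro k
    rw [innerSL_apply_apply, L2.inner_toLp_eq_integral _ (hU k), ← integral_uFun_mul_conj_vFun,
      intervalIntegral.integral_of_le zero_le_one, integral_Ioc_eq_integral_Ioo]
  refine (innerSL ℂ v).notMem_closure_span_image_ne U j ?_ fun k hk => ?_
  · rw [hpair, if_pos rfl]
    exact one_ne_zero
  · rw [hpair, if_neg hk]

theorem stmt_1 (h : ℝ) (hh : 0 < h) :
    (∀ j k : ℤ,
      (∫ x in (0:ℝ)..1, uFun h j x * (starRingEnd ℂ) (vFun h k x)) =
        if j = k then 1 else 0) ∧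
    (∀ U : ℤ → Lp ℂ 2 (volume.restrict (Ioo (0:ℝ) 1)),
      (∀ j, ⇑(U j) =ᵐ[volume.restrict (Ioo (0:ℝ) 1)] uFun h j) →
      ∀ j : ℤ,
        U j ∉ closure ((Submodule.span ℂ (U '' {k : ℤ | k ≠ j}) :
          Submodule ℂ (Lp ℂ 2 (volume.restrict (Ioo (0:ℝ) 1)))) : Set _)) :=
  stmt_1_general h
end
end

section
/- Let h > 0, let λ ∈ ℂ satisfy Δ(λ) := h − e^{iλ} ≠ 0, and let f : [0,1] → ℂ be continuous. Define g(x) = (i/Δ(λ))·e^{iλ(x+1)}·∫_0^1 e^{−iλt} f(t) dt + i·e^{iλx}·∫_0^x e^{−iλt} f(t) dt for x ∈ [0,1]. Then g is continuously differentiable on [0,1], satisfies −i·g′(x) − λ·g(x) = f(x) for all x ∈ [0,1], and satisfies the boundary condition h·g(0) = g(1). In other words, g = (O_h^(1) − λI)^{−1} f. -/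
/-!
The resolvent is `x ↦ e^{iλx}(C + i ∫_0^x e^{-iλt} f t dt)`, variation of constants for
`y' = iλ y + i f`; the constant `C` is fixed by the boundary condition `h y(0) = y(1)`,
which can be met exactly when `h ≠ e^{iλ}`. As `f` is only continuous on `[0,1]`, we
differentiate the resolvent of its constant extension `IccExtend`, which agrees with the
given one on `[0,1]`.
-/

open Complex MeasureTheory Set

noncomputable section

/-- The resolvent `(O_h^(1) - λ I)^{-1} f` of the operator `O_h^(1)`. -/
def resolventFun (h : ℝ) (lam : ℂ) (f : ℝ → ℂ) (x : ℝ) : ℂ :=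
  Complex.I / ((h : ℂ) - Complex.exp (Complex.I * lam)) *
      Complex.exp (Complex.I * lam * ((x : ℂ) + 1)) *
      (∫ t in (0:ℝ)..1, Complex.exp (-(Complex.I * lam * (t : ℂ))) * f t) +
    Complex.I * Complex.exp (Complex.I * lam * (x : ℂ)) *
      (∫ t in (0:ℝ)..x, Complex.exp (-(Complex.I * lam * (t : ℂ))) * f t)

theorem hasDerivAt_cexp_mul (c : ℂ) (x : ℝ) :
    HasDerivAt (fun x : ℝ => Complex.exp (c * x)) (c * Complex.exp (c * x)) x := by
  simpa [mul_comm] using ((Complex.ofRealCLM.hasDerivAt (x := x)).const_mul c).cexp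

theorem hasDerivAt_cexp_mul_integral_cexp_neg_mul {f : ℝ → ℂ} (hf : Continuous f) (c : ℂ)
    (x : ℝ) :
    HasDerivAt
      (fun x : ℝ => Complex.exp (c * x) * ∫ t in (0:ℝ)..x, Complex.exp (-(c * t)) * f t)
      (c * (Complex.exp (c * x) * ∫ t in (0:ℝ)..x, Complex.exp (-(c * t)) * f t) + f x) x := by
  have hcont : Continuous fun t : ℝ => Complex.exp (-(c * t)) * f t := by fun_prop
  have hprim := intervalIntegral.integral_hasDerivAt_right (hcont.intervalIntegrable 0 x)
    hcont.aestronglyMeasurable.stronglyMeasurableAtFilter hcont.continuousAt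
  have hcancel : Complex.exp (c * x) * Complex.exp (-(c * x)) = 1 := by
    rw [← Complex.exp_add, add_neg_cancel, Complex.exp_zero]
  refine ((hasDerivAt_cexp_mul c x).mul hprim).congr_deriv ?_
  linear_combination f x * hcancel

theorem hasDerivAt_resolventFun (h : ℝ) (lam : ℂ) {f : ℝ → ℂ} (hf : Continuous f) (x : ℝ) :
    HasDerivAt (resolventFun h lam f)
      (Complex.I * lam * resolventFun h lam f x + Complex.I * f x) x := by
  have hshift : HasDerivAt (fun x : ℝ => Complex.exp (Complex.I * lam * ((x : ℂ) + 1)))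
      (Complex.I * lam * Complex.exp (Complex.I * lam * ((x : ℂ) + 1))) x := by
    simpa using (hasDerivAt_cexp_mul (Complex.I * lam) (x + 1)).comp_add_const x 1
  have hfree :=
    (hshift.const_mul (Complex.I / ((h : ℂ) - Complex.exp (Complex.I * lam)))).mul_const
      (∫ t in (0:ℝ)..1, Complex.exp (-(Complex.I * lam * (t : ℂ))) * f t)
  have hforced := (hasDerivAt_cexp_mul_integral_cexp_neg_mul hf (Complex.I * lam) x).const_mul
    Complex.I
  refine ((hfree.add hforced).congr_deriv ?_).congr_of_eventuallyEq (.of_forall fun y => ?_)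
  · unfold resolventFun
    ring
  · simp only [Pi.add_apply, resolventFun]
    ring

theorem resolventFun_eqOn {h : ℝ} {lam : ℂ} {f g : ℝ → ℂ} (hfg : EqOn f g (Icc 0 1)) :
    EqOn (resolventFun h lam f) (resolventFun h lam g) (Icc 0 1) := by
  have hint : ∀ x ∈ Icc (0:ℝ) 1,
      (∫ t in (0:ℝ)..x, Complex.exp (-(Complex.I * lam * (t : ℂ))) * f t)
        = ∫ t in (0:ℝ)..x, Complex.exp (-(Complex.I * lam * (t : ℂ))) * g t := by
    intro x hx
    refine intervalIntegral.integral_congr fun t ht => ?_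
    rw [uIcc_of_le hx.1] at ht
    simp only [hfg ⟨ht.1, ht.2.trans hx.2⟩]
  intro x hx
  unfold resolventFun
  rw [hint x hx, hint 1 (right_mem_Icc.2 zero_le_one)]

theorem resolventFun_boundary {h : ℝ} {lam : ℂ}
    (hΔ : (h : ℂ) - Complex.exp (Complex.I * lam) ≠ 0) (f : ℝ → ℂ) :
    (h : ℂ) * resolventFun h lam f 0 = resolventFun h lam f 1 := by
  unfold resolventFun
  rw [intervalIntegral.integral_same]
  have hdouble : Complex.exp (Complex.I * lam * ((1 : ℝ) + 1)) =
      Complex.exp (Complex.I * lam) * Complex.exp (Complex.I * lam) := by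
    rw [← Complex.exp_add]; push_cast; ring_nf
  rw [hdouble]
  push_cast
  simp only [zero_add, mul_one]
  field_simp
  ring

theorem stmt_3_general (h : ℝ) (lam : ℂ)
    (hΔ : (h : ℂ) - Complex.exp (Complex.I * lam) ≠ 0)
    (f : ℝ → ℂ) (hf : ContinuousOn f (Icc 0 1)) :
    ∃ g' : ℝ → ℂ,
      ContinuousOn g' (Icc (0:ℝ) 1) ∧
      (∀ x ∈ Icc (0:ℝ) 1,
        HasDerivWithinAt (resolventFun h lam f) (g' x) (Icc (0:ℝ) 1) x) ∧
      (∀ x ∈ Icc (0:ℝ) 1,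
        -Complex.I * g' x - lam * resolventFun h lam f x = f x) ∧
      (h : ℂ) * resolventFun h lam f 0 = resolventFun h lam f 1 := by
  set F := IccExtend zero_le_one ((Icc (0:ℝ) 1).domRestrict f)
  have hF : Continuous F := hf.domRestrict.Icc_extend'
  have hFf : EqOn F f (Icc 0 1) := fun x hx => IccExtend_of_mem zero_le_one _ hx
  have hR := resolventFun_eqOn (h := h) (lam := lam) hFf
  have hderiv := hasDerivAt_resolventFun h lam hF
  refine ⟨fun x => Complex.I * lam * resolventFun h lam F x + Complex.I * F x, ?_, ?_, ?_,
    resolventFun_boundary hΔ f⟩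
  · have hRcont : Continuous (resolventFun h lam F) :=
      continuous_iff_continuousAt.2 fun x => (hderiv x).continuousAt
    exact (by fun_prop : Continuous _).continuousOn
  · intro x hx
    exact (hderiv x).hasDerivWithinAt.congr (fun y hy => (hR hy).symm) (hR hx).symm
  · intro x hx
    beta_reduce
    rw [hR hx, hFf hx]
    linear_combination (-lam * resolventFun h lam f x - f x) * Complex.I_sq

theorem stmt_3 (h : ℝ) (hh : 0 < h) (lam : ℂ)
    (hΔ : (h : ℂ) - Complex.exp (Complex.I * lam) ≠ 0)
    (f : ℝ → ℂ) (hf : ContinuousOn f (Icc 0 1)) :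
    ∃ g' : ℝ → ℂ,
      ContinuousOn g' (Icc (0:ℝ) 1) ∧
      (∀ x ∈ Icc (0:ℝ) 1,
        HasDerivWithinAt (resolventFun h lam f) (g' x) (Icc (0:ℝ) 1) x) ∧
      (∀ x ∈ Icc (0:ℝ) 1,
        -Complex.I * g' x - lam * resolventFun h lam f x = f x) ∧
      (h : ℂ) * resolventFun h lam f 0 = resolventFun h lam f 1 :=
  stmt_3_general h lam hΔ f hf
end
end

section
/- Plancherel identity for biorthogonal expansions: let (u_ξ)_{ξ∈I} and (v_ξ)_{ξ∈I} be biorthogonal families in L²(Ω), and let f ∈ L²(Ω) be such that the family (f̂(ξ)·u_ξ)_{ξ∈I} has sum f in L²(Ω) and the family (f̂_*(ξ)·v_ξ)_{ξ∈I} has sum f in L²(Ω). Then the families (f̂(ξ)·conj(f̂_*(ξ)))_{ξ∈I} and (f̂_*(ξ)·conj(f̂(ξ)))_{ξ∈I} are summable, both sums are equal to ‖f‖²_{L²(Ω)}, and in particular Σ_{ξ∈I} f̂(ξ)·conj(f̂_*(ξ)) is a nonnegative real number. -/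
open Complex MeasureTheory Set

noncomputable section

/-! Applying the continuous functional `⟪f, ·⟫` to the expansion `f = ∑ f̂(ξ) u_ξ` gives
`‖f‖² = ∑ f̂(ξ) ⟪f, u_ξ⟫ = ∑ f̂(ξ) conj (f̂_*(ξ))`; the expansion in the `v_ξ` gives the other sum. -/

theorem HasSum.hasSum_mul_conj_inner_self {ι 𝕜 E : Type*} [RCLike 𝕜] [NormedAddCommGroup E]
    [InnerProductSpace 𝕜 E] {c : ι → 𝕜} {x : ι → E} {f : E}
    (h : HasSum (fun i => c i • x i) f) :
    HasSum (fun i => c i * (starRingEnd 𝕜) (inner 𝕜 (x i) f)) ((‖f‖ ^ 2 : ℝ) : 𝕜) := by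
  have hpair := (innerSL 𝕜 f).hasSum h
  simp only [innerSL_apply_apply, inner_smul_right, inner_self_eq_norm_sq_to_K] at hpair
  simpa only [inner_conj_symm, RCLike.ofReal_pow] using hpair

theorem stmt_8_general {n : ℕ} (Ω : Set (Fin n → ℝ))
    {ι : Type*}
    (u v : ι → Lp ℂ 2 (volume.restrict Ω))
    (f : Lp ℂ 2 (volume.restrict Ω))
    (hf : HasSum (fun ξ => (inner ℂ (v ξ) f : ℂ) • u ξ) f)
    (hf' : HasSum (fun ξ => (inner ℂ (u ξ) f : ℂ) • v ξ) f) :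
    HasSum (fun ξ => (inner ℂ (v ξ) f : ℂ) * (starRingEnd ℂ) (inner ℂ (u ξ) f : ℂ))
      ((‖f‖ ^ 2 : ℝ) : ℂ) ∧
    HasSum (fun ξ => (inner ℂ (u ξ) f : ℂ) * (starRingEnd ℂ) (inner ℂ (v ξ) f : ℂ))
      ((‖f‖ ^ 2 : ℝ) : ℂ) :=
  ⟨hf.hasSum_mul_conj_inner_self, hf'.hasSum_mul_conj_inner_self⟩

theorem stmt_8 {n : ℕ} (Ω : Set (Fin n → ℝ)) (hΩo : IsOpen Ω)
    (hΩb : Bornology.IsBounded Ω)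
    {ι : Type*} [Countable ι] [DecidableEq ι]
    (u v : ι → Lp ℂ 2 (volume.restrict Ω))
    (hbi : ∀ ξ η : ι, (inner ℂ (v η) (u ξ) : ℂ) = if ξ = η then 1 else 0)
    (f : Lp ℂ 2 (volume.restrict Ω))
    (hf : HasSum (fun ξ => (inner ℂ (v ξ) f : ℂ) • u ξ) f)
    (hf' : HasSum (fun ξ => (inner ℂ (u ξ) f : ℂ) • v ξ) f) :
    HasSum (fun ξ => (inner ℂ (v ξ) f : ℂ) * (starRingEnd ℂ) (inner ℂ (u ξ) f : ℂ))
      ((‖f‖ ^ 2 : ℝ) : ℂ) ∧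
    HasSum (fun ξ => (inner ℂ (u ξ) f : ℂ) * (starRingEnd ℂ) (inner ℂ (v ξ) f : ℂ))
      ((‖f‖ ^ 2 : ℝ) : ℂ) :=
  stmt_8_general Ω u v f hf hf'
end
end

section
/- Let (u_ξ)_{ξ∈I} be a Riesz basis of L²(Ω) with biorthogonal family (v_ξ)_{ξ∈I}. Then for all f, g ∈ L²(Ω) the family (f̂(ξ)·ĝ(ξ))_{ξ∈I} is square-summable and the series Σ_{ξ∈I} f̂(ξ)·ĝ(ξ)·u_ξ converges in L²(Ω); denoting its sum by f ⋆_L g, one has ⟨f ⋆_L g, v_η⟩ = f̂(η)·ĝ(η) for every η ∈ I, and the L-convolution is commutative: f ⋆_L g = g ⋆_L f. -/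
open Complex MeasureTheory Set

noncomputable section

/-- The Riesz basis `u_ξ = T (e_ξ)` built from an orthonormal Hilbert basis `e`
and a continuous linear isomorphism `T`. -/
def uSys {H : Type*} [NormedAddCommGroup H] [InnerProductSpace ℂ H] [CompleteSpace H]
    {ι : Type*} (e : HilbertBasis ι ℂ H) (T : H ≃L[ℂ] H) (ξ : ι) : H :=
  T (e ξ)

/-- The biorthogonal family `v_ξ = (T⁻¹)* (e_ξ)`. -/
def vSys {H : Type*} [NormedAddCommGroup H] [InnerProductSpace ℂ H] [CompleteSpace H]
    {ι : Type*} (e : HilbertBasis ι ℂ H) (T : H ≃L[ℂ] H) (ξ : ι) : H :=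
  ContinuousLinearMap.adjoint (T.symm : H →L[ℂ] H) (e ξ)

/-!
Writing `x = T (Σ c_ξ e_ξ)`, the coefficients `⟪v_ξ, x⟫` are exactly the Hilbert-basis
coordinates `c = e.repr (T⁻¹ x)`. The product of two `ℓ²` sequences is again in `ℓ²`
(an `ℓ²` sequence is bounded), so `f ⋆_L g` is the image under `T` of the vector whose
coordinates are the products; commutativity is that of multiplication in `ℂ`.
-/

open scoped ENNReal lp

theorem Memℓp.mul {ι 𝕜 : Type*} [RCLike 𝕜] {p : ℝ≥0∞} {f g : ι → 𝕜}
    (hf : Memℓp f p) (hg : Memℓp g p) : Memℓp (fun i ↦ f i * g i) p :=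
  hf.bilin_of_top_right (fun _ ↦ ContinuousLinearMap.mul 𝕜 𝕜)
    (fun _ ↦ ContinuousLinearMap.opNorm_mul_le 𝕜 𝕜) (hg.of_exponent_ge le_top)

theorem Memℓp.summable_norm_sq {ι : Type*} {E : ι → Type*} [∀ i, NormedAddCommGroup (E i)]
    {f : ∀ i, E i} (hf : Memℓp f 2) : Summable fun i ↦ ‖f i‖ ^ 2 := by
  simpa using hf.summable (by norm_num)

section RieszBasis

variable {H : Type*} [NormedAddCommGroup H] [InnerProductSpace ℂ H] [CompleteSpace H]
  {ι : Type*} (e : HilbertBasis ι ℂ H) (T : H ≃L[ℂ] H)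

theorem inner_vSys (ξ : ι) (x : H) : inner ℂ (vSys e T ξ) x = e.repr (T.symm x) ξ := by
  rw [vSys, ContinuousLinearMap.adjoint_inner_left, e.repr_apply_apply]
  rfl

theorem hasSum_smul_uSys (c : ℓ²(ι, ℂ)) :
    HasSum (fun ξ ↦ c ξ • uSys e T ξ) (T (e.repr.symm c)) := by
  simpa [uSys] using (e.hasSum_repr_symm c).mapL (T : H →L[ℂ] H)

theorem inner_vSys_repr_symm (c : ℓ²(ι, ℂ)) (η : ι) :
    inner ℂ (vSys e T η) (T (e.repr.symm c)) = c η := by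
  simp [inner_vSys]

end RieszBasis

theorem stmt_10_general {n : ℕ} (Ω : Set (Fin n → ℝ))
    {ι : Type*}
    (e : HilbertBasis ι ℂ (Lp ℂ 2 (volume.restrict Ω)))
    (T : Lp ℂ 2 (volume.restrict Ω) ≃L[ℂ] Lp ℂ 2 (volume.restrict Ω))
    (f g : Lp ℂ 2 (volume.restrict Ω)) :
    Summable (fun ξ =>
      ‖(inner ℂ (vSys e T ξ) f : ℂ) * (inner ℂ (vSys e T ξ) g : ℂ)‖ ^ 2) ∧
    ∃ S : Lp ℂ 2 (volume.restrict Ω),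
      HasSum (fun ξ =>
        ((inner ℂ (vSys e T ξ) f : ℂ) * (inner ℂ (vSys e T ξ) g : ℂ)) • uSys e T ξ) S ∧
      (∀ η, (inner ℂ (vSys e T η) S : ℂ) =
        (inner ℂ (vSys e T η) f : ℂ) * (inner ℂ (vSys e T η) g : ℂ)) ∧
      HasSum (fun ξ =>
        ((inner ℂ (vSys e T ξ) g : ℂ) * (inner ℂ (vSys e T ξ) f : ℂ)) • uSys e T ξ) S := by
  have hprod : Memℓp (fun ξ ↦ inner ℂ (vSys e T ξ) f * inner ℂ (vSys e T ξ) g) 2 := by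
    simp only [inner_vSys]
    exact (lp.memℓp _).mul (lp.memℓp _)
  let c : ℓ²(ι, ℂ) := ⟨_, hprod⟩
  refine ⟨hprod.summable_norm_sq, T (e.repr.symm c), hasSum_smul_uSys e T c,
    inner_vSys_repr_symm e T c, ?_⟩
  simpa only [mul_comm] using hasSum_smul_uSys e T c

theorem stmt_10 {n : ℕ} (Ω : Set (Fin n → ℝ)) (hΩo : IsOpen Ω)
    (hΩb : Bornology.IsBounded Ω)
    {ι : Type*} [Countable ι]
    (e : HilbertBasis ι ℂ (Lp ℂ 2 (volume.restrict Ω)))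
    (T : Lp ℂ 2 (volume.restrict Ω) ≃L[ℂ] Lp ℂ 2 (volume.restrict Ω))
    (f g : Lp ℂ 2 (volume.restrict Ω)) :
    Summable (fun ξ =>
      ‖(inner ℂ (vSys e T ξ) f : ℂ) * (inner ℂ (vSys e T ξ) g : ℂ)‖ ^ 2) ∧
    ∃ S : Lp ℂ 2 (volume.restrict Ω),
      HasSum (fun ξ =>
        ((inner ℂ (vSys e T ξ) f : ℂ) * (inner ℂ (vSys e T ξ) g : ℂ)) • uSys e T ξ) S ∧
      (∀ η, (inner ℂ (vSys e T η) S : ℂ) =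
        (inner ℂ (vSys e T η) f : ℂ) * (inner ℂ (vSys e T η) g : ℂ)) ∧
      HasSum (fun ξ =>
        ((inner ℂ (vSys e T ξ) g : ℂ) * (inner ℂ (vSys e T ξ) f : ℂ)) • uSys e T ξ) S :=
  stmt_10_general Ω e T f g
end
end

section
/- L²-boundedness of L-pseudo-differential operators: let Ω ⊂ ℝⁿ be a bounded open set and k an integer with k > n/2. Let (u_ξ)_{ξ∈I} be a Riesz basis of L²(Ω) with biorthogonal family (v_ξ)_{ξ∈I}. Assume Ω satisfies the Sobolev embedding inequality: there is C_S > 0 such that every k-times continuously differentiable function g : Ω → ℂ with bounded partial derivatives up to order k satisfies sup_{y∈Ω} |g(y)|² ≤ C_S·Σ_{|α|≤k} ∫_Ω |∂^α g(y)|² dy. Let a : Ω × I → ℂ be such that for each ξ ∈ I the function x ↦ a(x,ξ) is k-times continuously differentiable on Ω, and suppose there is C > 0 with |∂_x^α a(x,ξ)| ≤ C for all x ∈ Ω, all ξ ∈ I and all multi-indices α with |α| ≤ k. Then there exists C′ > 0 such that for every f ∈ L²(Ω) whose L-Fourier coefficients ⟨f, v_ξ⟩ vanish for all but finitely many ξ,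 the function (Op_L(a) f)(x) := Σ_{ξ∈I} u_ξ(x)·a(x,ξ)·⟨f, v_ξ⟩ belongs to L²(Ω) and ‖Op_L(a) f‖_{L²(Ω)} ≤ C′·‖f‖_{L²(Ω)}. -/
open Complex MeasureTheory Set

noncomputable section

open scoped ENNReal

/-!
Fix `y ∈ Ω` and freeze the first variable of the symbol: the Sobolev inequality applied to
`z ↦ ∑ ξ, f̂ ξ * u ξ y * a z ξ` at `z = y` bounds `|Op_L(a) f y|²` by
`CS * ∑_{i ≤ k} ∫_Ω ‖∑ ξ, (f̂ ξ * u ξ y) • Dⁱ a(·, ξ) z‖² dz`. Integrating in `y` and exchanging the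
two integrals (Tonelli), for fixed `z` the `y`-integral is controlled coordinatewise: each
coordinate of the multilinear map is the Riesz expansion `∑ ξ, (Dⁱ a(z, ξ)[e_j] * f̂ ξ) • u ξ`,
a multiplier bounded by `C` applied to coefficients that satisfy Bessel's inequality, so its
`L²` norm is at most `‖T‖ C ‖T⁻¹‖ ‖f‖`. The remaining `z`-integral only costs the finite volume
of the bounded set `Ω`.
-/
theorem ContinuousMultilinearMap.norm_le_sum_norm_apply_single {𝕜 F : Type*}
    [NontriviallyNormedField 𝕜] [SeminormedAddCommGroup F] [NormedSpace 𝕜 F] {n i : ℕ}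
    (A : ContinuousMultilinearMap 𝕜 (fun _ : Fin i => Fin n → 𝕜) F) :
    ‖A‖ ≤ ∑ j : Fin i → Fin n, ‖A fun l => Pi.single (j l) 1‖ := by
  classical
  refine A.opNorm_le_bound (by positivity) fun m => ?_
  have hA : A m = ∑ j : Fin i → Fin n, (∏ l, m l (j l)) • A fun l => Pi.single (j l) 1 := by
    conv_lhs => rw [show m = fun l => ∑ t, m l t • Pi.single t 1 from
      funext fun l => pi_eq_sum_univ' (m l)]
    simp_rw [A.map_sum, A.map_smul_univ]
  calc ‖A m‖ ≤ ∑ j : Fin i → Fin n, ‖A fun l => Pi.single (j l) 1‖ * ∏ l, ‖m l‖ := by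
        rw [hA]
        refine (norm_sum_le _ _).trans (Finset.sum_le_sum fun j _ => ?_)
        rw [norm_smul, mul_comm, norm_prod]
        gcongr with l
        exact norm_le_pi_norm (m l) (j l)
    _ = _ := (Finset.sum_mul ..).symm

theorem iteratedFDerivWithin_sum_smul_apply {𝕜 R E F ι : Type*} [NontriviallyNormedField 𝕜]
    [NormedAddCommGroup E] [NormedSpace 𝕜 E] [NormedAddCommGroup F] [NormedSpace 𝕜 F]
    [Semiring R] [Module R F] [SMulCommClass 𝕜 R F] [ContinuousConstSMul R F]
    {s : Set E} (hs : UniqueDiffOn 𝕜 s) {x : E} (hx : x ∈ s) {i : ℕ} {S : Finset ι}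
    {g : ι → E → F} (hg : ∀ ξ ∈ S, ContDiffWithinAt 𝕜 i (g ξ) s x) (b : ι → R) :
    iteratedFDerivWithin 𝕜 i (fun z => ∑ ξ ∈ S, b ξ • g ξ z) s x
      = ∑ ξ ∈ S, b ξ • iteratedFDerivWithin 𝕜 i (g ξ) s x := by
  have := iteratedFDerivWithin_sum_apply hs hx (u := S) (f := fun ξ => b ξ • g ξ)
    fun ξ hξ => (hg ξ hξ).const_smul (b ξ)
  simp only [Finset.sum_fn, Pi.smul_apply] at this
  rw [this]
  exact Finset.sum_congr rfl fun ξ hξ => iteratedFDerivWithin_const_smul_apply (hg ξ hξ) hs hx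

section Integrals

variable {α : Type*} [MeasurableSpace α] {μ : Measure α}

theorem lintegral_enorm_sq_eq_eLpNorm_sq {ε : Type*} [ENorm ε] (f : α → ε) :
    ∫⁻ x, ‖f x‖ₑ ^ 2 ∂μ = eLpNorm f 2 μ ^ 2 := by
  simpa using (eLpNorm_nnreal_pow_eq_lintegral (f := f) (μ := μ) (p := 2) two_ne_zero).symm

theorem ofReal_integral_norm_sq_le {G : Type*} [NormedAddCommGroup G] (f : α → G) :
    ENNReal.ofReal (∫ x, ‖f x‖ ^ 2 ∂μ) ≤ ∫⁻ x, ‖f x‖ₑ ^ 2 ∂μ := by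
  calc ENNReal.ofReal (∫ x, ‖f x‖ ^ 2 ∂μ) = ‖∫ x, ‖f x‖ ^ 2 ∂μ‖ₑ :=
        (Real.enorm_of_nonneg (integral_nonneg fun _ => by positivity)).symm
    _ ≤ ∫⁻ x, ‖‖f x‖ ^ 2‖ₑ ∂μ := enorm_integral_le_lintegral_enorm _
    _ = ∫⁻ x, ‖f x‖ₑ ^ 2 ∂μ := by simp only [enorm_pow, enorm_norm]

theorem lintegral_lintegral_le_measure_univ_mul {β : Type*} [MeasurableSpace β] {ν : Measure β}
    [SFinite μ] [SFinite ν] {F : α → β → ℝ≥0∞} (hF : AEMeasurable (Function.uncurry F) (μ.prod ν))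
    {K : ℝ≥0∞} (hK : ∀ᵐ z ∂ν, ∫⁻ x, F x z ∂μ ≤ K) :
    ∫⁻ x, ∫⁻ z, F x z ∂ν ∂μ ≤ ν univ * K := by
  rw [lintegral_lintegral_swap hF]
  calc ∫⁻ z, ∫⁻ x, F x z ∂μ ∂ν ≤ ∫⁻ _, K ∂ν := lintegral_mono_ae hK
    _ = ν univ * K := by rw [lintegral_const, mul_comm]

end Integrals

section RieszBasis

variable {H : Type*} [NormedAddCommGroup H] [InnerProductSpace ℂ H] [CompleteSpace H]
  {ι : Type*} (e : HilbertBasis ι ℂ H) (T : H ≃L[ℂ] H)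

theorem norm_sum_smul_uSys_le (b : ι → ℂ) (s : Finset ι) :
    ‖∑ ξ ∈ s, b ξ • uSys e T ξ‖ ≤ ‖T.toContinuousLinearMap‖ * √(∑ ξ ∈ s, ‖b ξ‖ ^ 2) := by
  have hT : ∑ ξ ∈ s, b ξ • uSys e T ξ = T (∑ ξ ∈ s, b ξ • e ξ) := by simp [uSys, map_sum]
  have he : ‖∑ ξ ∈ s, b ξ • e ξ‖ ^ 2 = ∑ ξ ∈ s, ‖b ξ‖ ^ 2 := by
    have := e.orthonormal.inner_sum b b s
    simp only [inner_self_eq_norm_sq_to_K, RCLike.conj_mul] at this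
    exact_mod_cast this
  rw [hT, ← he, Real.sqrt_sq (norm_nonneg _)]
  exact T.toContinuousLinearMap.le_opNorm _

theorem sum_norm_inner_vSys_sq_le (f : H) (s : Finset ι) :
    ∑ ξ ∈ s, ‖inner ℂ (vSys e T ξ) f‖ ^ 2 ≤ (‖T.symm.toContinuousLinearMap‖ * ‖f‖) ^ 2 := by
  simp only [vSys, ContinuousLinearMap.adjoint_inner_left]
  exact (e.orthonormal.sum_inner_products_le _).trans
    (pow_le_pow_left₀ (norm_nonneg _) (T.symm.toContinuousLinearMap.le_opNorm f) 2)

theorem norm_sum_mul_inner_vSys_smul_uSys_le (f : H) (s : Finset ι) (φ : ι → ℂ) {C : ℝ}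
    (hC : 0 ≤ C) (hφ : ∀ ξ ∈ s, ‖φ ξ‖ ≤ C) :
    ‖∑ ξ ∈ s, (φ ξ * inner ℂ (vSys e T ξ) f) • uSys e T ξ‖
      ≤ ‖T.toContinuousLinearMap‖ * C * ‖T.symm.toContinuousLinearMap‖ * ‖f‖ := by
  have hsum : ∑ ξ ∈ s, ‖φ ξ * inner ℂ (vSys e T ξ) f‖ ^ 2
      ≤ (C * (‖T.symm.toContinuousLinearMap‖ * ‖f‖)) ^ 2 := by
    calc ∑ ξ ∈ s, ‖φ ξ * inner ℂ (vSys e T ξ) f‖ ^ 2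
        ≤ ∑ ξ ∈ s, C ^ 2 * ‖inner ℂ (vSys e T ξ) f‖ ^ 2 :=
          Finset.sum_le_sum fun ξ hξ => by rw [norm_mul, mul_pow]; gcongr; exact hφ ξ hξ
      _ ≤ (C * (‖T.symm.toContinuousLinearMap‖ * ‖f‖)) ^ 2 := by
          rw [← Finset.mul_sum, mul_pow]; gcongr; exact sum_norm_inner_vSys_sq_le e T f s
  calc _ ≤ ‖T.toContinuousLinearMap‖ * √(∑ ξ ∈ s, ‖φ ξ * inner ℂ (vSys e T ξ) f‖ ^ 2) :=
        norm_sum_smul_uSys_le e T _ s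
    _ ≤ ‖T.toContinuousLinearMap‖ * (C * (‖T.symm.toContinuousLinearMap‖ * ‖f‖)) := by
        gcongr
        exact (Real.sqrt_le_sqrt hsum).trans_eq (Real.sqrt_sq (by positivity))
    _ = _ := by ring

end RieszBasis

theorem eLpNorm_sum_inner_vSys_mul_uSys_smul_le {ι α : Type*} [MeasurableSpace α]
    {μ : Measure α} (e : HilbertBasis ι ℂ (Lp ℂ 2 μ)) (T : Lp ℂ 2 μ ≃L[ℂ] Lp ℂ 2 μ)
    (f : Lp ℂ 2 μ) (S : Finset ι) {n i : ℕ}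
    (M : ι → ContinuousMultilinearMap ℝ (fun _ : Fin i => Fin n → ℝ) ℂ) {C : ℝ} (hC : 0 ≤ C)
    (hM : ∀ ξ ∈ S, ‖M ξ‖ ≤ C) :
    eLpNorm (fun y => ∑ ξ ∈ S, (inner ℂ (vSys e T ξ) f * uSys e T ξ y) • M ξ) 2 μ
      ≤ ENNReal.ofReal (n ^ i * (‖T.toContinuousLinearMap‖ * C
          * ‖T.symm.toContinuousLinearMap‖ * ‖f‖)) := by
  set c : ι → ℂ := fun ξ => inner ℂ (vSys e T ξ) f
  set B := ‖T.toContinuousLinearMap‖ * C * ‖T.symm.toContinuousLinearMap‖ * ‖f‖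
  let basis : (Fin i → Fin n) → Fin i → Fin n → ℝ := fun j l => Pi.single (j l) 1
  let h : (Fin i → Fin n) → Lp ℂ 2 μ := fun j => ∑ ξ ∈ S, (M ξ (basis j) * c ξ) • uSys e T ξ
  have hh : ∀ j, ‖h j‖ ≤ B := fun j =>
    norm_sum_mul_inner_vSys_smul_uSys_le e T f S _ hC fun ξ hξ =>
      ((M ξ).le_opNorm _).trans (by simp [basis, Pi.norm_single, hM ξ hξ])
  have hcoord : ∀ᵐ y ∂μ, ∀ j, h j y = ∑ ξ ∈ S, (c ξ * uSys e T ξ y) * M ξ (basis j) := by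
    rw [ae_all_iff]
    intro j
    filter_upwards [Lp.coeFn_fun_finsetSum S fun ξ => (M ξ (basis j) * c ξ) • uSys e T ξ,
      (S.eventually_all.2 fun ξ _ => Lp.coeFn_smul (M ξ (basis j) * c ξ) (uSys e T ξ))]
      with y hy hsmul
    rw [hy]
    exact Finset.sum_congr rfl fun ξ hξ => by
      rw [hsmul ξ hξ, Pi.smul_apply, smul_eq_mul]; ring
  have hpt : ∀ᵐ y ∂μ, ‖∑ ξ ∈ S, (c ξ * uSys e T ξ y) • M ξ‖ ≤ ‖∑ j, ‖h j y‖‖ := by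
    filter_upwards [hcoord] with y hy
    refine (ContinuousMultilinearMap.norm_le_sum_norm_apply_single _).trans_eq ?_
    rw [Real.norm_of_nonneg (by positivity)]
    simp [hy, basis]
  calc eLpNorm (fun y => ∑ ξ ∈ S, (c ξ * uSys e T ξ y) • M ξ) 2 μ
      ≤ eLpNorm (∑ j, fun y => ‖h j y‖) 2 μ := eLpNorm_mono_ae (by simpa using hpt)
    _ ≤ ∑ j, eLpNorm (fun y => ‖h j y‖) 2 μ :=
        eLpNorm_sum_le (fun j _ => (Lp.aestronglyMeasurable _).norm) one_le_two
    _ ≤ ∑ _j : Fin i → Fin n, ENNReal.ofReal B := by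
        gcongr with j
        rw [eLpNorm_norm, ← Lp.enorm_def, ← ofReal_norm]
        exact ENNReal.ofReal_le_ofReal (hh j)
    _ = ENNReal.ofReal (n ^ i * B) := by
        simp only [Finset.sum_const, Finset.card_univ, Fintype.card_fun, Fintype.card_fin,
          nsmul_eq_mul]
        rw [← Nat.cast_pow, ENNReal.ofReal_mul (p := ((n ^ i : ℕ) : ℝ)) (Nat.cast_nonneg _),
          ENNReal.ofReal_natCast]

def SobolevInequality {E : Type*} [NormedAddCommGroup E] [NormedSpace ℝ E] [MeasureSpace E]
    (Ω : Set E) (k : ℕ) (CS : ℝ) : Prop :=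
  ∀ g : E → ℂ, ContDiffOn ℝ k g Ω →
    (∃ M : ℝ, ∀ i ≤ k, ∀ y ∈ Ω, ‖iteratedFDerivWithin ℝ i g Ω y‖ ≤ M) →
    ∀ y ∈ Ω, ‖g y‖ ^ 2 ≤
      CS * ∑ i ∈ Finset.range (k + 1), ∫ z in Ω, ‖iteratedFDerivWithin ℝ i g Ω z‖ ^ 2

theorem SobolevInequality.enorm_sq_sum_mul_le {E ι : Type*} [NormedAddCommGroup E]
    [NormedSpace ℝ E] [MeasureSpace E] {Ω : Set E} {k : ℕ} {CS : ℝ}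
    (hSob : SobolevInequality Ω k CS) (hΩ : UniqueDiffOn ℝ Ω) (hΩm : MeasurableSet Ω)
    (hCS : 0 ≤ CS) {S : Finset ι}
    {a : ι → E → ℂ} (ha : ∀ ξ ∈ S, ContDiffOn ℝ k (a ξ) Ω) {C : ℝ}
    (hab : ∀ ξ ∈ S, ∀ i ≤ k, ∀ x ∈ Ω, ‖iteratedFDerivWithin ℝ i (a ξ) Ω x‖ ≤ C)
    (b : ι → ℂ) {y : E} (hy : y ∈ Ω) :
    ‖∑ ξ ∈ S, b ξ * a ξ y‖ₑ ^ 2 ≤ ENNReal.ofReal CS * ∑ i ∈ Finset.range (k + 1),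
      ∫⁻ z in Ω, ‖∑ ξ ∈ S, b ξ • iteratedFDerivWithin ℝ i (a ξ) Ω z‖ₑ ^ 2 := by
  set g : E → ℂ := fun z => ∑ ξ ∈ S, b ξ • a ξ z
  have hD : ∀ i ≤ k, ∀ z ∈ Ω, iteratedFDerivWithin ℝ i g Ω z
      = ∑ ξ ∈ S, b ξ • iteratedFDerivWithin ℝ i (a ξ) Ω z := fun i hi z hz =>
    iteratedFDerivWithin_sum_smul_apply hΩ hz
      (fun ξ hξ => ((ha ξ hξ).of_le (by exact_mod_cast hi)) z hz) b
  have hbdd : ∀ i ≤ k, ∀ z ∈ Ω, ‖iteratedFDerivWithin ℝ i g Ω z‖ ≤ ∑ ξ ∈ S, ‖b ξ‖ * C := by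
    intro i hi z hz
    rw [hD i hi z hz]
    refine (norm_sum_le _ _).trans (Finset.sum_le_sum fun ξ hξ => ?_)
    rw [norm_smul]
    gcongr
    exact hab ξ hξ i hi z hz
  have hg := hSob g (ContDiffOn.sum fun ξ hξ => (ha ξ hξ).const_smul (b ξ)) ⟨_, hbdd⟩ y hy
  calc ‖∑ ξ ∈ S, b ξ * a ξ y‖ₑ ^ 2 = ENNReal.ofReal (‖g y‖ ^ 2) := by
        simp [g, ENNReal.ofReal_pow, ofReal_norm]
    _ ≤ ENNReal.ofReal (CS * ∑ i ∈ Finset.range (k + 1),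
          ∫ z in Ω, ‖iteratedFDerivWithin ℝ i g Ω z‖ ^ 2) := ENNReal.ofReal_le_ofReal hg
    _ ≤ ENNReal.ofReal CS * ∑ i ∈ Finset.range (k + 1),
          ∫⁻ z in Ω, ‖iteratedFDerivWithin ℝ i g Ω z‖ₑ ^ 2 := by
        rw [ENNReal.ofReal_mul hCS,
          ENNReal.ofReal_sum_of_nonneg fun i _ => integral_nonneg fun _ => by positivity]
        gcongr
        exact ofReal_integral_norm_sq_le _
    _ = _ := by
        refine congrArg _ (Finset.sum_congr rfl fun i hi =>
          setLIntegral_congr_fun hΩm fun z hz => ?_)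
        rw [hD i (Finset.mem_range_succ_iff.1 hi) z hz]

theorem lintegral_enorm_sq_sum_uSys_mul_symbol_le {n k : ℕ} {Ω : Set (Fin n → ℝ)}
    (hΩ : IsOpen Ω) {CS : ℝ} (hSob : SobolevInequality Ω k CS) (hCS : 0 ≤ CS) {ι : Type*}
    (e : HilbertBasis ι ℂ (Lp ℂ 2 (volume.restrict Ω)))
    (T : Lp ℂ 2 (volume.restrict Ω) ≃L[ℂ] Lp ℂ 2 (volume.restrict Ω))
    {a : (Fin n → ℝ) → ι → ℂ} (ha : ∀ ξ, ContDiffOn ℝ k (fun x => a x ξ) Ω) {C : ℝ} (hC : 0 ≤ C)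
    (hab : ∀ ξ, ∀ i ≤ k, ∀ x ∈ Ω, ‖iteratedFDerivWithin ℝ i (fun y => a y ξ) Ω x‖ ≤ C)
    (f : Lp ℂ 2 (volume.restrict Ω)) (S : Finset ι) :
    ∫⁻ y in Ω, ‖∑ ξ ∈ S, uSys e T ξ y * a y ξ * inner ℂ (vSys e T ξ) f‖ₑ ^ 2
      ≤ ENNReal.ofReal CS * ∑ i ∈ Finset.range (k + 1), volume Ω *
          ENNReal.ofReal (n ^ i * (‖T.toContinuousLinearMap‖ * C
            * ‖T.symm.toContinuousLinearMap‖ * ‖f‖)) ^ 2 := by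
  set c : ι → ℂ := fun ξ => inner ℂ (vSys e T ξ) f
  set D := fun i ξ => iteratedFDerivWithin ℝ i (fun y => a y ξ) Ω
  set Ψ : ℕ → (Fin n → ℝ) → (Fin n → ℝ) → ℝ≥0∞ :=
    fun i y z => ‖∑ ξ ∈ S, (c ξ * uSys e T ξ y) • D i ξ z‖ₑ ^ 2
  have hΨ : ∀ i ∈ Finset.range (k + 1),
      AEMeasurable (Function.uncurry (Ψ i)) ((volume.restrict Ω).prod (volume.restrict Ω)) := by
    intro i hi
    have hDc : ∀ ξ, ContinuousOn (D i ξ) Ω := fun ξ =>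
      (ha ξ).continuousOn_iteratedFDerivWithin (by exact_mod_cast Finset.mem_range_succ_iff.1 hi)
        hΩ.uniqueDiffOn
    refine (Finset.aestronglyMeasurable_fun_sum _ fun ξ _ => ?_).enorm.pow_const 2
    exact ((Lp.aestronglyMeasurable _).comp_fst.const_mul (c ξ)).fun_smul
      ((hDc ξ).aestronglyMeasurable hΩ.measurableSet).comp_snd
  have hpoint : ∀ y ∈ Ω, ‖∑ ξ ∈ S, uSys e T ξ y * a y ξ * c ξ‖ₑ ^ 2
      ≤ ENNReal.ofReal CS * ∑ i ∈ Finset.range (k + 1), ∫⁻ z in Ω, Ψ i y z := by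
    intro y hy
    have := hSob.enorm_sq_sum_mul_le hΩ.uniqueDiffOn hΩ.measurableSet hCS (S := S) (fun ξ _ => ha ξ)
      (fun ξ _ => hab ξ) (fun ξ => c ξ * uSys e T ξ y) hy
    convert this using 4 with ξ
    ring
  have hker : ∀ i ∈ Finset.range (k + 1), ∀ᵐ z ∂volume.restrict Ω, ∫⁻ y in Ω, Ψ i y z ≤
      ENNReal.ofReal (n ^ i * (‖T.toContinuousLinearMap‖ * C
        * ‖T.symm.toContinuousLinearMap‖ * ‖f‖)) ^ 2 := by
    intro i hi
    filter_upwards [ae_restrict_mem hΩ.measurableSet] with z hz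
    rw [lintegral_enorm_sq_eq_eLpNorm_sq (fun y => ∑ ξ ∈ S, (c ξ * uSys e T ξ y) • D i ξ z)]
    gcongr
    exact eLpNorm_sum_inner_vSys_mul_uSys_smul_le e T f S _ hC
      fun ξ _ => hab ξ i (Finset.mem_range_succ_iff.1 hi) z hz
  calc ∫⁻ y in Ω, ‖∑ ξ ∈ S, uSys e T ξ y * a y ξ * c ξ‖ₑ ^ 2
      ≤ ∫⁻ y in Ω, ENNReal.ofReal CS * ∑ i ∈ Finset.range (k + 1), ∫⁻ z in Ω, Ψ i y z :=
        setLIntegral_mono' hΩ.measurableSet hpoint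
    _ = ENNReal.ofReal CS * ∑ i ∈ Finset.range (k + 1), ∫⁻ y in Ω, ∫⁻ z in Ω, Ψ i y z := by
        rw [lintegral_const_mul' _ _ ENNReal.ofReal_ne_top,
          lintegral_finsetSum' _ fun i hi => (hΨ i hi).lintegral_prod_right]
    _ ≤ _ := by
        gcongr with i hi
        simpa using lintegral_lintegral_le_measure_univ_mul (hΨ i hi) (hker i hi)

theorem eLpNorm_sum_uSys_mul_symbol_le {n k : ℕ} {Ω : Set (Fin n → ℝ)} (hΩ : IsOpen Ω)
    (hΩb : Bornology.IsBounded Ω) {CS : ℝ} (hSob : SobolevInequality Ω k CS) (hCS : 0 ≤ CS)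
    {ι : Type*} (e : HilbertBasis ι ℂ (Lp ℂ 2 (volume.restrict Ω)))
    (T : Lp ℂ 2 (volume.restrict Ω) ≃L[ℂ] Lp ℂ 2 (volume.restrict Ω))
    {a : (Fin n → ℝ) → ι → ℂ} (ha : ∀ ξ, ContDiffOn ℝ k (fun x => a x ξ) Ω) {C : ℝ} (hC : 0 ≤ C)
    (hab : ∀ ξ, ∀ i ≤ k, ∀ x ∈ Ω, ‖iteratedFDerivWithin ℝ i (fun y => a y ξ) Ω x‖ ≤ C)
    (f : Lp ℂ 2 (volume.restrict Ω)) (S : Finset ι) :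
    eLpNorm (fun y => ∑ ξ ∈ S, uSys e T ξ y * a y ξ * inner ℂ (vSys e T ξ) f) 2
        (volume.restrict Ω)
      ≤ ENNReal.ofReal (√(CS * ∑ i ∈ Finset.range (k + 1), (volume Ω).toReal *
          (n ^ i * (‖T.toContinuousLinearMap‖ * C * ‖T.symm.toContinuousLinearMap‖)) ^ 2)
          * ‖f‖) := by
  set B := ‖T.toContinuousLinearMap‖ * C * ‖T.symm.toContinuousLinearMap‖ with hB
  have hterm : ∀ i : ℕ, volume Ω * ENNReal.ofReal (n ^ i * (B * ‖f‖)) ^ 2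
      = ENNReal.ofReal ((volume Ω).toReal * ((n : ℝ) ^ i * B) ^ 2 * ‖f‖ ^ 2) := fun i => by
    conv_lhs => rw [← ENNReal.ofReal_toReal (hΩb.measure_lt_top (μ := volume)).ne]
    rw [← ENNReal.ofReal_pow (by positivity), ← ENNReal.ofReal_mul ENNReal.toReal_nonneg]
    ring_nf
  rw [← ENNReal.pow_le_pow_left_iff two_ne_zero, ← lintegral_enorm_sq_eq_eLpNorm_sq]
  refine (lintegral_enorm_sq_sum_uSys_mul_symbol_le hΩ hSob hCS e T ha hC hab f S).trans_eq ?_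
  simp only [← hB, hterm]
  rw [← ENNReal.ofReal_sum_of_nonneg fun _ _ => by positivity, ← ENNReal.ofReal_mul hCS,
    ← ENNReal.ofReal_pow (by positivity), mul_pow, Real.sq_sqrt (by positivity)]
  simp only [Finset.mul_sum, Finset.sum_mul, mul_assoc]

theorem stmt_18_general {n : ℕ} (Ω : Set (Fin n → ℝ)) (hΩo : IsOpen Ω)
    (hΩb : Bornology.IsBounded Ω)
    (k : ℕ)
    {ι : Type*}
    (e : HilbertBasis ι ℂ (Lp ℂ 2 (volume.restrict Ω)))
    (T : Lp ℂ 2 (volume.restrict Ω) ≃L[ℂ] Lp ℂ 2 (volume.restrict Ω))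
    (CS : ℝ) (hCS : 0 < CS)
    (hSob : ∀ g : (Fin n → ℝ) → ℂ, ContDiffOn ℝ k g Ω →
      (∃ M : ℝ, ∀ i ≤ k, ∀ y ∈ Ω, ‖iteratedFDerivWithin ℝ i g Ω y‖ ≤ M) →
      ∀ y ∈ Ω, ‖g y‖ ^ 2 ≤
        CS * ∑ i ∈ Finset.range (k + 1),
          ∫ z in Ω, ‖iteratedFDerivWithin ℝ i g Ω z‖ ^ 2)
    (a : (Fin n → ℝ) → ι → ℂ)
    (ha : ∀ ξ, ContDiffOn ℝ k (fun x => a x ξ) Ω)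
    (C : ℝ) (hC : 0 < C)
    (hab : ∀ ξ, ∀ i ≤ k, ∀ x ∈ Ω,
      ‖iteratedFDerivWithin ℝ i (fun y => a y ξ) Ω x‖ ≤ C) :
    ∃ C' : ℝ, 0 < C' ∧
      ∀ f : Lp ℂ 2 (volume.restrict Ω),
        {ξ : ι | (inner ℂ (vSys e T ξ) f : ℂ) ≠ 0}.Finite →
        MemLp
          (fun x => ∑' ξ, (uSys e T ξ) x * a x ξ * (inner ℂ (vSys e T ξ) f : ℂ))
          2 (volume.restrict Ω) ∧
        (eLpNorm
          (fun x => ∑' ξ, (uSys e T ξ) x * a x ξ * (inner ℂ (vSys e T ξ) f : ℂ))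
          2 (volume.restrict Ω)).toReal ≤ C' * ‖f‖ := by
  set K := CS * ∑ i ∈ Finset.range (k + 1), (volume Ω).toReal *
    (n ^ i * (‖T.toContinuousLinearMap‖ * C * ‖T.symm.toContinuousLinearMap‖)) ^ 2
  refine ⟨√K + 1, by positivity, fun f hfin => ?_⟩
  have hsum : (fun x => ∑' ξ, uSys e T ξ x * a x ξ * inner ℂ (vSys e T ξ) f)
      = fun x => ∑ ξ ∈ hfin.toFinset, uSys e T ξ x * a x ξ * inner ℂ (vSys e T ξ) f :=
    funext fun x => tsum_eq_sum fun ξ hξ => by simp_all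
  have hnorm := eLpNorm_sum_uSys_mul_symbol_le hΩo hΩb hSob hCS.le e T ha hC.le hab f
    hfin.toFinset
  have hmeas : AEStronglyMeasurable (fun x => ∑ ξ ∈ hfin.toFinset,
      uSys e T ξ x * a x ξ * inner ℂ (vSys e T ξ) f) (volume.restrict Ω) :=
    Finset.aestronglyMeasurable_fun_sum _ fun ξ _ => ((Lp.aestronglyMeasurable _).mul
      ((ha ξ).continuousOn.aestronglyMeasurable hΩo.measurableSet)).mul_const _
  rw [hsum]
  refine ⟨⟨hmeas, hnorm.trans_lt ENNReal.ofReal_lt_top⟩, ?_⟩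
  refine (ENNReal.toReal_le_of_le_ofReal (by positivity) hnorm).trans ?_
  gcongr
  exact le_add_of_nonneg_right zero_le_one

theorem stmt_18 {n : ℕ} (Ω : Set (Fin n → ℝ)) (hΩo : IsOpen Ω)
    (hΩb : Bornology.IsBounded Ω)
    (k : ℕ) (hk : (n : ℝ) / 2 < (k : ℝ))
    {ι : Type*} [Countable ι]
    (e : HilbertBasis ι ℂ (Lp ℂ 2 (volume.restrict Ω)))
    (T : Lp ℂ 2 (volume.restrict Ω) ≃L[ℂ] Lp ℂ 2 (volume.restrict Ω))
    (CS : ℝ) (hCS : 0 < CS)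
    (hSob : ∀ g : (Fin n → ℝ) → ℂ, ContDiffOn ℝ k g Ω →
      (∃ M : ℝ, ∀ i ≤ k, ∀ y ∈ Ω, ‖iteratedFDerivWithin ℝ i g Ω y‖ ≤ M) →
      ∀ y ∈ Ω, ‖g y‖ ^ 2 ≤
        CS * ∑ i ∈ Finset.range (k + 1),
          ∫ z in Ω, ‖iteratedFDerivWithin ℝ i g Ω z‖ ^ 2)
    (a : (Fin n → ℝ) → ι → ℂ)
    (ha : ∀ ξ, ContDiffOn ℝ k (fun x => a x ξ) Ω)
    (C : ℝ) (hC : 0 < C)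
    (hab : ∀ ξ, ∀ i ≤ k, ∀ x ∈ Ω,
      ‖iteratedFDerivWithin ℝ i (fun y => a y ξ) Ω x‖ ≤ C) :
    ∃ C' : ℝ, 0 < C' ∧
      ∀ f : Lp ℂ 2 (volume.restrict Ω),
        {ξ : ι | (inner ℂ (vSys e T ξ) f : ℂ) ≠ 0}.Finite →
        MemLp
          (fun x => ∑' ξ, (uSys e T ξ) x * a x ξ * (inner ℂ (vSys e T ξ) f : ℂ))
          2 (volume.restrict Ω) ∧
        (eLpNorm
          (fun x => ∑' ξ, (uSys e T ξ) x * a x ξ * (inner ℂ (vSys e T ξ) f : ℂ))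
          2 (volume.restrict Ω)).toReal ≤ C' * ‖f‖ :=
  stmt_18_general Ω hΩo hΩb k e T CS hCS hSob a ha C hC hab
end
end
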